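/- If b is odd, then the product of subsets H' = X_{s_1} X_{s_2} ⋯ X_{s_{n-1}} is a subgroup of H_b, and H' contains the product X_{t_1} ⋯ X_{t_r} for every finite sequence of reflections t_1, ..., t_r of W; in particular X_t ⊆ H' for every reflection t. -/

import Mathlib

noncomputable section

open scoped Pointwise

/-- The general linear group `GL_n(K)`. -/
abbrev GLn (K : Type) [Field K] (n : ℕ) : Type := GL (Fin n) K

/-- `g` is a permutation matrix. -/
def IsPermMat {K : Type} [Field K] {n : ℕ} (g : GLn K n) : Prop :=
  ∃ σ : Equiv.Perm (Fin n),
    ∀ i j : Fin n, (g : Matrix (Fin n) (Fin n) K) i j = if σ j = i then 1 else 0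

/-- `W`, the group of permutation matrices in `GL_n(K)`. -/
def Wset (K : Type) [Field K] (n : ℕ) : Set (GLn K n) := {g | IsPermMat g}

/-- The set `S = {s_1, …, s_{n-1}}` of Coxeter generators of `W`: the matrices of the
adjacent transpositions `(i, i+1)`. -/
def Sset (K : Type) [Field K] (n : ℕ) : Set (GLn K n) :=
  {g | ∃ i j : Fin n, (i : ℕ) + 1 = (j : ℕ) ∧
    ∀ k l : Fin n, (g : Matrix (Fin n) (Fin n) K) k l = if Equiv.swap i j l = k then 1 else 0}

/-- The set `𝒯 = { w s_i w⁻¹ : w ∈ W, s_i ∈ S }` of reflections of `W`. -/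
def Tset (K : Type) [Field K] (n : ℕ) : Set (GLn K n) :=
  {t | ∃ w ∈ Wset K n, ∃ s ∈ Sset K n, t = w * s * w⁻¹}

/-- `H_b`: the group of diagonal matrices whose entries are `b`-th roots of unity
(i.e. entries in `F_b`). -/
def Hbset (K : Type) [Field K] (n b : ℕ) : Set (GLn K n) :=
  {g | (∀ i j : Fin n, i ≠ j → (g : Matrix (Fin n) (Fin n) K) i j = 0) ∧
    ∀ i : Fin n, (g : Matrix (Fin n) (Fin n) K) i i ^ b = 1}

/-- The group `WH_b`: the set of products `w * d` with `w ∈ W` and `d ∈ H_b`. -/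
def WHbset (K : Type) [Field K] (n b : ℕ) : Set (GLn K n) :=
  {x | ∃ w ∈ Wset K n, ∃ d ∈ Hbset K n b, x = w * d}

/-- The length function on monomial matrices: the number of inversions of the underlying
permutation.  For `x = w d ∈ WH_b` this is the Coxeter length `ℓ(w)`, i.e. `len` is the
length function of `W` lifted to `WH_b` via `ℓ(wd) = ℓ(dw) = ℓ(w)`. -/
def len {K : Type} [Field K] {n : ℕ} (g : GLn K n) : ℕ :=
  Set.ncard {p : Fin n × Fin n | p.1 < p.2 ∧ ∃ i i' : Fin n, i' < i ∧
    (g : Matrix (Fin n) (Fin n) K) i p.1 ≠ 0 ∧ (g : Matrix (Fin n) (Fin n) K) i' p.2 ≠ 0}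

/-- The diagonal matrix `h_{k,l}(α) = h_k(α) h_l((-1)^{b-1} α⁻¹)`. -/
def hmat (K : Type) [Field K] {n : ℕ} (b : ℕ) (k l : Fin n) (α : K) :
    Matrix (Fin n) (Fin n) K :=
  Matrix.diagonal fun p => if p = k then α else if p = l then (-1 : K) ^ (b - 1) * α⁻¹ else 1

/-- For a reflection `t` interchanging the `k`-th and `l`-th standard basis vectors
(`t = w s_i w⁻¹`), the subset `X_t = { w h_{i,i+1}(α) w⁻¹ : α ∈ F_b } =
{ h_{k,l}(α) : α^b = 1 }` of `H_b`. -/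
def Xset (K : Type) [Field K] (n b : ℕ) (t : GLn K n) : Set (GLn K n) :=
  {d | ∃ k l : Fin n, ∃ α : K, α ^ b = 1 ∧ k ≠ l ∧
    (∀ p q : Fin n, (t : Matrix (Fin n) (Fin n) K) p q = if Equiv.swap k l q = p then 1 else 0) ∧
    (d : Matrix (Fin n) (Fin n) K) = hmat K b k l α}

/-- `X_s = { h_{k,l}(α) : α^b = 1 }` for the simple reflection `s` interchanging the
`k`-th and `l`-th standard basis vectors. -/
def XsPair (K : Type) [Field K] {n : ℕ} (b : ℕ) (k l : Fin n) : Set (GLn K n) :=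
  {d | ∃ α : K, α ^ b = 1 ∧ (d : Matrix (Fin n) (Fin n) K) = hmat K b k l α}

/-- The product `X_1 ⋯ X_r` of a list of subsets of a monoid. -/
def SetProd {G : Type} [Monoid G] : List (Set G) → Set G
  | [] => {1}
  | X :: L => X * SetProd L

/-- `U`: the group of upper triangular unipotent matrices. -/
def Uset (K : Type) [Field K] (n : ℕ) : Set (GLn K n) :=
  {g | (∀ i j : Fin n, j < i → (g : Matrix (Fin n) (Fin n) K) i j = 0) ∧
    ∀ i : Fin n, (g : Matrix (Fin n) (Fin n) K) i i = 1}

/-- `H_a`: the group of diagonal matrices with entries in `F_a` (the `a`-th roots of unity). -/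
def Haset (K : Type) [Field K] (n a : ℕ) : Set (GLn K n) :=
  {g | (∀ i j : Fin n, i ≠ j → (g : Matrix (Fin n) (Fin n) K) i j = 0) ∧
    ∀ i : Fin n, (g : Matrix (Fin n) (Fin n) K) i i ^ a = 1}

/-- `B_a = H_a U`. -/
def Baset (K : Type) [Field K] (n a : ℕ) : Set (GLn K n) :=
  {g | ∃ h ∈ Haset K n a, ∃ u ∈ Uset K n, g = h * u}

/-- `A_v = ℤ[a, v, v⁻¹]`, realized as polynomials in the indeterminate `a` with
coefficients Laurent polynomials in the indeterminate `v`. -/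
abbrev Av : Type := Polynomial (LaurentPolynomial ℤ)

/-- The indeterminate `a` of `A_v`. -/
def aA : Av := Polynomial.X

/-- The indeterminate `v` of `A_v`. -/
def vA : Av := Polynomial.C (LaurentPolynomial.T 1)

/-- `v⁻¹ ∈ A_v`. -/
def vI : Av := Polynomial.C (LaurentPolynomial.T (-1))

/-- The product of subsets `H' = X_{s_1} X_{s_2} ⋯ X_{s_{n-1}}` of `H_b` (the factor for
an index `i` with `i + 1 ≥ n` is the trivial set `{1}`). -/
def HprimeSet (n b : ℕ) (hn : 0 < n) : Set (GLn ℂ n) :=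
  SetProd (List.ofFn fun i : Fin (n - 1) =>
    XsPair ℂ b (⟨(i : ℕ), by have := i.isLt; omega⟩ : Fin n)
      (⟨(i : ℕ) + 1, by have := i.isLt; omega⟩ : Fin n))

/-!
For odd `b` the sign `(-1) ^ (b - 1)` is `1`, so `h_{k,l}(α)` is the diagonal matrix with `α` at
`k`, `α⁻¹` at `l` and `1` elsewhere; hence every `X_t` lies in the group `HbDetOne` of diagonal
matrices with `b`-th roots of unity on the diagonal and determinant `1`. Conversely an element
`diag(v_0, …, v_{n-1})` of that group is the telescoping product `∏ᵢ h_{i,i+1}(v_0 ⋯ v_i)`, the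
last partial product `v_0 ⋯ v_{n-1}` being the determinant `1`. So `H' = HbDetOne`, a group that
contains all products of the sets `X_t`.
-/

open Matrix Finset

section SetProd

variable {G : Type} [Monoid G]

theorem setProd_subset {S : Submonoid G} :
    ∀ {L : List (Set G)}, (∀ X ∈ L, X ⊆ S) → SetProd L ⊆ S
  | [], _ => by simp [SetProd, S.one_mem]
  | X :: L, hL => by
    rintro _ ⟨x, hx, y, hy, rfl⟩
    exact S.mul_mem (hL X List.mem_cons_self hx)
      (setProd_subset (fun Y hY => hL Y (List.mem_cons_of_mem X hY)) hy)

theorem prod_ofFn_mem_setProd :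
    ∀ {m : ℕ} {f : Fin m → G} {X : Fin m → Set G}, (∀ i, f i ∈ X i) →
      (List.ofFn f).prod ∈ SetProd (List.ofFn X)
  | 0, _, _, _ => by simp [SetProd]
  | _ + 1, _, _, h => by
    rw [List.ofFn_succ, List.ofFn_succ, List.prod_cons]
    exact Set.mul_mem_mul (h 0) (prod_ofFn_mem_setProd fun i => h i.succ)

end SetProd

section Telescope

variable {G : Type} [CommGroup G]

theorem prod_range_ite_eq_succ (A : ℕ → G) {m p : ℕ} (hp : p ≤ m) (hA : A (m + 1) = 1) :
    ∏ i ∈ range m, (if p = i then A (i + 1) else 1) = A (p + 1) := by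
  have h := Finset.prod_ite_eq (range (m + 1)) p fun i => A (i + 1)
  rwa [prod_range_succ, if_pos (mem_range.2 (Nat.lt_succ_of_le hp)),
    ite_eq_right_iff.2 fun _ => hA, mul_one] at h

theorem prod_range_ite_succ_eq (A : ℕ → G) {m p : ℕ} (hp : p ≤ m) (hA : A 0 = 1) :
    ∏ i ∈ range m, (if p = i + 1 then A (i + 1) else 1) = A p := by
  have h := Finset.prod_ite_eq (range (m + 1)) p A
  rwa [prod_range_succ', if_pos (mem_range.2 (Nat.lt_succ_of_le hp)),
    ite_eq_right_iff.2 fun _ => hA, mul_one] at h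

theorem prod_mulSingle_div_mulSingle {n : ℕ} (A : ℕ → G) (h0 : A 0 = 1) (hn : A n = 1) :
    ∏ i : Fin (n - 1),
        (Pi.mulSingle (⟨i, by have := i.isLt; omega⟩ : Fin n) (A (i + 1)) /
          Pi.mulSingle (⟨i + 1, by have := i.isLt; omega⟩ : Fin n) (A (i + 1))) =
      fun p : Fin n => A (p + 1) / A p := by
  funext p
  have hp : (p : ℕ) ≤ n - 1 := by omega
  simp only [Finset.prod_apply, Pi.div_apply, Pi.mulSingle_apply, Fin.ext_iff,
    Finset.prod_div_distrib]
  rw [Fin.prod_univ_eq_prod_range (fun i => if (p : ℕ) = i then A (i + 1) else 1),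
    Fin.prod_univ_eq_prod_range (fun i => if (p : ℕ) = i + 1 then A (i + 1) else 1),
    prod_range_ite_eq_succ A hp (by rwa [Nat.sub_add_cancel (by omega)]),
    prod_range_ite_succ_eq A hp h0]

end Telescope

section Diagonal

variable (K : Type) [Field K] (n : ℕ)

def diagUnits : (Fin n → Kˣ) →* GLn K n :=
  (Units.map (diagonalRingHom (Fin n) K : (Fin n → K) →* Matrix (Fin n) (Fin n) K)).comp
    MulEquiv.piUnits.symm.toMonoidHom

variable {K n}

@[simp]
theorem coe_diagUnits (v : Fin n → Kˣ) :
    (diagUnits K n v : Matrix (Fin n) (Fin n) K) = diagonal fun i => (v i : K) :=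
  rfl

end Diagonal

section RootsProdOne

variable (G : Type) [CommGroup G] (n b : ℕ)

def rootsProdOne : Subgroup (Fin n → G) where
  carrier := {v | v ^ b = 1 ∧ ∏ i, v i = 1}
  mul_mem' := by
    rintro v w ⟨hv, hv'⟩ ⟨hw, hw'⟩
    exact ⟨by rw [mul_pow, hv, hw, one_mul], by simp [prod_mul_distrib, hv', hw']⟩
  one_mem' := by simp
  inv_mem' := by
    rintro v ⟨hv, hv'⟩
    exact ⟨by rw [inv_pow, hv, inv_one], by simp [prod_inv_distrib, hv']⟩

variable {G n b}

theorem mulSingle_div_mulSingle_mem_rootsProdOne {u : G} (hu : u ^ b = 1) (k l : Fin n) :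
    Pi.mulSingle k u / Pi.mulSingle l u ∈ rootsProdOne G n b :=
  ⟨by simp [div_pow, ← Pi.mulSingle_pow, hu], by simp [prod_div_distrib]⟩

end RootsProdOne

section HbDetOne

variable {K : Type} [Field K] {n b : ℕ}

variable (K n b) in
def HbDetOne : Subgroup (GLn K n) :=
  (rootsProdOne Kˣ n b).map (diagUnits K n)

theorem HbDetOne_subset_Hbset : (HbDetOne K n b : Set (GLn K n)) ⊆ Hbset K n b := by
  rintro _ ⟨v, ⟨hv, -⟩, rfl⟩
  refine ⟨fun i j hij => by simp [diagonal_apply_ne _ hij], fun i => ?_⟩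
  simpa using congrArg Units.val (congrFun hv i)

theorem hmat_eq_diagonal_mulSingle_div (hb : Odd b) {k l : Fin n} (hkl : k ≠ l) (u : Kˣ) :
    hmat K b k l u =
      diagonal fun p => ((Pi.mulSingle k u / Pi.mulSingle l u : Fin n → Kˣ) p : K) := by
  have hsign : (-1 : K) ^ (b - 1) = 1 := (Nat.Odd.sub_odd hb odd_one).neg_one_pow
  unfold hmat
  congr 1
  funext p
  by_cases hpk : p = k
  · subst hpk; simp [hkl]
  · by_cases hpl : p = l
    · subst hpl; simp [hpk, hsign]
    · simp [hpk, hpl]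

theorem diagUnits_mulSingle_div_mem_XsPair (hb : Odd b) {k l : Fin n} (hkl : k ≠ l) {u : Kˣ}
    (hu : u ^ b = 1) : diagUnits K n (Pi.mulSingle k u / Pi.mulSingle l u) ∈ XsPair K b k l :=
  ⟨u, by rw [← Units.val_pow_eq_pow_val, hu, Units.val_one],
    by rw [coe_diagUnits, hmat_eq_diagonal_mulSingle_div hb hkl]⟩

theorem XsPair_subset_HbDetOne (hb : Odd b) {k l : Fin n} (hkl : k ≠ l) :
    XsPair K b k l ⊆ HbDetOne K n b := by
  rintro d ⟨α, hα, hd⟩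
  have hα0 : α ≠ 0 := by rintro rfl; simp [hb.pos.ne'] at hα
  let u := Units.mk0 α hα0
  have hu : u ^ b = 1 :=
    Units.ext (by rw [Units.val_pow_eq_pow_val, Units.val_mk0, hα, Units.val_one])
  refine ⟨Pi.mulSingle k u / Pi.mulSingle l u, mulSingle_div_mulSingle_mem_rootsProdOne hu k l,
    Units.ext ?_⟩
  rw [coe_diagUnits, ← hmat_eq_diagonal_mulSingle_div hb hkl, hd, Units.val_mk0]

theorem Xset_subset_HbDetOne (hb : Odd b) (t : GLn K n) : Xset K n b t ⊆ HbDetOne K n b := by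
  rintro d ⟨k, l, α, hα, hkl, -, hd⟩
  exact XsPair_subset_HbDetOne hb hkl ⟨α, hα, hd⟩

theorem HprimeSet_subset_HbDetOne (hn : 0 < n) (hb : Odd b) :
    HprimeSet n b hn ⊆ HbDetOne ℂ n b :=
  setProd_subset (S := (HbDetOne ℂ n b).toSubmonoid) fun X hX => by
    obtain ⟨i, rfl⟩ := List.mem_ofFn.1 hX
    exact XsPair_subset_HbDetOne hb (by simp [Fin.ext_iff])

theorem HbDetOne_subset_HprimeSet (hn : 0 < n) (hb : Odd b) :
    (HbDetOne ℂ n b : Set (GLn ℂ n)) ⊆ HprimeSet n b hn := by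
  rintro _ ⟨v, ⟨hv, hprod⟩, rfl⟩
  let A : ℕ → ℂˣ := fun j => ∏ q ∈ range j, if h : q < n then v ⟨q, h⟩ else 1
  have hA_pow (j : ℕ) : A j ^ b = 1 := by
    rw [← prod_pow]
    refine prod_eq_one fun q _ => ?_
    split_ifs
    exacts [congrFun hv _, one_pow b]
  have hA_last : A n = 1 := by
    simp only [A]
    rw [← Fin.prod_univ_eq_prod_range (fun q => if h : q < n then v ⟨q, h⟩ else 1)]
    simpa using hprod
  have hv_telescope : v = ∏ i : Fin (n - 1),
      (Pi.mulSingle (⟨i, by have := i.isLt; omega⟩ : Fin n) (A (i + 1)) /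
        Pi.mulSingle (⟨i + 1, by have := i.isLt; omega⟩ : Fin n) (A (i + 1))) := by
    rw [prod_mulSingle_div_mulSingle A (prod_range_zero _) hA_last]
    funext p
    simp [A, prod_range_succ, p.isLt]
  rw [hv_telescope, ← List.prod_ofFn, map_list_prod, List.map_ofFn]
  exact prod_ofFn_mem_setProd fun i =>
    diagUnits_mulSingle_div_mem_XsPair hb (by simp [Fin.ext_iff]) (hA_pow _)

theorem HprimeSet_eq_HbDetOne (hn : 0 < n) (hb : Odd b) :
    HprimeSet n b hn = HbDetOne ℂ n b :=
  (HprimeSet_subset_HbDetOne hn hb).antisymm (HbDetOne_subset_HprimeSet hn hb)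

end HbDetOne

theorem Hprime_subgroup_general (n b : ℕ) (hn : 0 < n) (hodd : Odd b) :
    HprimeSet n b hn ⊆ Hbset ℂ n b ∧
    (∃ Hsub : Subgroup (GLn ℂ n), (Hsub : Set (GLn ℂ n)) = HprimeSet n b hn) ∧
    (∀ L : List (GLn ℂ n), (∀ t ∈ L, t ∈ Tset ℂ n) →
      SetProd (L.map (Xset ℂ n b)) ⊆ HprimeSet n b hn) ∧
    (∀ t ∈ Tset ℂ n, Xset ℂ n b t ⊆ HprimeSet n b hn) := by
  rw [HprimeSet_eq_HbDetOne hn hodd]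
  refine ⟨HbDetOne_subset_Hbset, ⟨HbDetOne ℂ n b, rfl⟩, fun L _ => ?_,
    fun t _ => Xset_subset_HbDetOne hodd t⟩
  refine setProd_subset (S := (HbDetOne ℂ n b).toSubmonoid) fun X hX => ?_
  obtain ⟨t, -, rfl⟩ := List.mem_map.1 hX
  exact Xset_subset_HbDetOne hodd t

/-- If `b` is odd then `H' = X_{s_1} ⋯ X_{s_{n-1}}` is a subgroup of
`H_b` containing the product `X_{t_1} ⋯ X_{t_r}` for every finite sequence of reflections
`t_1, …, t_r`; in particular `X_t ⊆ H'` for every reflection `t`. -/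
theorem Hprime_subgroup (n b : ℕ) (hn : 0 < n) (hb : 0 < b) (hodd : Odd b) :
    HprimeSet n b hn ⊆ Hbset ℂ n b ∧
    (∃ Hsub : Subgroup (GLn ℂ n), (Hsub : Set (GLn ℂ n)) = HprimeSet n b hn) ∧
    (∀ L : List (GLn ℂ n), (∀ t ∈ L, t ∈ Tset ℂ n) →
      SetProd (L.map (Xset ℂ n b)) ⊆ HprimeSet n b hn) ∧
    (∀ t ∈ Tset ℂ n, Xset ℂ n b t ⊆ HprimeSet n b hn) :=
  Hprime_subgroup_general n b hn hodd
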